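/- arXiv:1301.4309 — 5 statements merged into one kernel-verified Lean document; each statement's English description precedes it below -/
import Mathlib

section
/- Let x₁, …, x_k be elements of the isotropic cone C_n with ⟨x_i | x_j⟩ ≤ 0 for all i, j, let t₁, …, t_k be strictly positive real numbers, and set u = t₁x₁ + ⋯ + t_k x_k. If q_{2,n}(u) = 0, then ⟨x_i | x_j⟩ = 0 for all i, j; consequently the linear span of {x₁, …, x_k} is totally isotropic (q_{2,n} vanishes identically on it). -/
/-- The symmetric bilinear form associated to `q_{2,n}` on `ℝ × ℝ × ℝⁿ`
(coordinates `(u, v, x₁, …, xₙ)`). -/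
def bilin (n : ℕ) (x y : ℝ × ℝ × (Fin n → ℝ)) : ℝ :=
  -(x.1 * y.1) - x.2.1 * y.2.1 + ∑ i, x.2.2 i * y.2.2 i

/-- The quadratic form `q_{2,n}(u,v,x₁,…,xₙ) = -u² - v² + x₁² + ⋯ + xₙ²`. -/
def quad (n : ℕ) (x : ℝ × ℝ × (Fin n → ℝ)) : ℝ := bilin n x x

/-!
Expanding `q(∑ tᵢ xᵢ) = ∑ᵢ ∑ⱼ tᵢ tⱼ ⟨xᵢ | xⱼ⟩` writes `0` as a sum of nonpositive terms, so every
term vanishes, and `tᵢ tⱼ > 0` forces `⟨xᵢ | xⱼ⟩ = 0`. The same expansion for an arbitrary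
combination `∑ cᵢ xᵢ` then shows that `q` vanishes on the span.
-/

namespace LinearMap.BilinForm

variable {R M ι : Type*} [CommRing R] [AddCommGroup M] [Module R M] [Fintype ι]

theorem apply_sum_smul_sum_smul (B : LinearMap.BilinForm R M) (x : ι → M) (c d : ι → R) :
    B (∑ i, c i • x i) (∑ j, d j • x j) = ∑ i, ∑ j, c i * d j * B (x i) (x j) := by
  simp only [map_sum, map_smul, LinearMap.sum_apply, LinearMap.smul_apply, smul_eq_mul,
    Finset.mul_sum]
  rw [Finset.sum_comm]
  exact Finset.sum_congr rfl fun i _ => Finset.sum_congr rfl fun j _ => by ring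

theorem apply_eq_zero_of_apply_sum_smul_self_eq_zero [LinearOrder R] [IsStrictOrderedRing R]
    (B : LinearMap.BilinForm R M) (x : ι → M) (t : ι → R) (hpair : ∀ i j, B (x i) (x j) ≤ 0)
    (ht : ∀ i, 0 < t i) (hu : B (∑ i, t i • x i) (∑ i, t i • x i) = 0) (i j : ι) :
    B (x i) (x j) = 0 := by
  have hterm : ∀ i j, t i * t j * B (x i) (x j) ≤ 0 := fun i j =>
    mul_nonpos_of_nonneg_of_nonpos (mul_pos (ht i) (ht j)).le (hpair i j)
  have hrow : ∀ i, ∑ j, t i * t j * B (x i) (x j) ≤ 0 := fun i =>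
    Finset.sum_nonpos fun j _ => hterm i j
  rw [apply_sum_smul_sum_smul] at hu
  have hrow_zero := (Finset.sum_eq_zero_iff_of_nonpos fun i _ => hrow i).mp hu i
    (Finset.mem_univ i)
  have hij := (Finset.sum_eq_zero_iff_of_nonpos fun j _ => hterm i j).mp hrow_zero j
    (Finset.mem_univ j)
  exact (mul_eq_zero.mp hij).resolve_left (mul_pos (ht i) (ht j)).ne'

theorem apply_self_eq_zero_of_mem_span (B : LinearMap.BilinForm R M) (x : ι → M)
    (hzero : ∀ i j, B (x i) (x j) = 0) {w : M} (hw : w ∈ Submodule.span R (Set.range x)) :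
    B w w = 0 := by
  obtain ⟨c, rfl⟩ := (Submodule.mem_span_range_iff_exists_fun R).mp hw
  rw [apply_sum_smul_sum_smul]
  simp [hzero]

end LinearMap.BilinForm

def bilinForm (n : ℕ) : LinearMap.BilinForm ℝ (ℝ × ℝ × (Fin n → ℝ)) :=
  LinearMap.mk₂ ℝ (bilin n)
    (fun a b c => by simp only [bilin, Prod.fst_add, Prod.snd_add, Pi.add_apply, add_mul,
      Finset.sum_add_distrib]; ring)
    (fun r a b => by simp only [bilin, Prod.smul_fst, Prod.smul_snd, Pi.smul_apply, smul_eq_mul,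
      mul_assoc, ← Finset.mul_sum]; ring)
    (fun a b c => by simp only [bilin, Prod.fst_add, Prod.snd_add, Pi.add_apply, mul_add,
      Finset.sum_add_distrib]; ring)
    (fun r a b => by simp only [bilin, Prod.smul_fst, Prod.smul_snd, Pi.smul_apply, smul_eq_mul,
      mul_left_comm _ r, ← Finset.mul_sum]; ring)

theorem bilinForm_apply (n : ℕ) (a b : ℝ × ℝ × (Fin n → ℝ)) : bilinForm n a b = bilin n a b :=
  rfl

theorem stmt1_general (n k : ℕ) (x : Fin k → ℝ × ℝ × (Fin n → ℝ))
    (t : Fin k → ℝ)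
    (hpair : ∀ i j, bilin n (x i) (x j) ≤ 0)
    (ht : ∀ i, 0 < t i)
    (hu : quad n (∑ i, t i • x i) = 0) :
    (∀ i j, bilin n (x i) (x j) = 0) ∧
    (∀ w ∈ Submodule.span ℝ (Set.range x), quad n w = 0) := by
  simp only [quad, ← bilinForm_apply] at hpair hu ⊢
  have hzero := (bilinForm n).apply_eq_zero_of_apply_sum_smul_self_eq_zero x t hpair ht hu
  exact ⟨hzero, fun w hw => (bilinForm n).apply_self_eq_zero_of_mem_span x hzero hw⟩

/-- If `x₁, …, x_k` lie on the isotropic cone of `q_{2,n}`, have pairwise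
nonpositive scalar products, and some strictly positive combination
`u = ∑ tᵢ xᵢ` satisfies `q_{2,n}(u) = 0`, then all scalar products
`⟨xᵢ | xⱼ⟩` vanish, and the linear span of the `xᵢ` is totally isotropic. -/
theorem stmt1 (n k : ℕ) (hn : 1 ≤ n) (x : Fin k → ℝ × ℝ × (Fin n → ℝ))
    (t : Fin k → ℝ)
    (hiso : ∀ i, quad n (x i) = 0)
    (hpair : ∀ i j, bilin n (x i) (x j) ≤ 0)
    (ht : ∀ i, 0 < t i)
    (hu : quad n (∑ i, t i • x i) = 0) :
    (∀ i j, bilin n (x i) (x j) = 0) ∧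
    (∀ w ∈ Submodule.span ℝ (Set.range x), quad n w = 0) :=
  stmt1_general n k x t hpair ht hu
end

section
/- Let (θ, x) and (θ′, x′) be points of ℝ × S^{n-1} with |θ − θ′| ≤ π, and set P(θ, x) = (cos θ, sin θ, x) ∈ C_n ⊆ ℝ^{n+2}. Then: (i) |θ − θ′| ≤ d(x, x′) if and only if ⟨P(θ,x) | P(θ′,x′)⟩ ≤ 0; and (ii) |θ − θ′| < d(x, x′) if and only if ⟨P(θ,x) | P(θ′,x′)⟩ < 0. (This is the coordinate form of the criterion: a subset of the Einstein universe is achronal, resp. acausal, iff the scalar products of distinct points are nonpositive, resp. negative.) -/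
open scoped RealInnerProductSpace
open Real

/-- Spherical (geodesic) distance between unit vectors of a Euclidean space:
`d(x,y) = arccos⟨x,y⟩`. -/
noncomputable def sphDist {n : ℕ} (x y : EuclideanSpace ℝ (Fin n)) : ℝ :=
  Real.arccos ⟪x, y⟫

/-- The symmetric bilinear form of `q_{2,n}` on `ℝ × ℝ × ℝⁿ`. -/
noncomputable def bilinE (n : ℕ) (p q : ℝ × ℝ × EuclideanSpace ℝ (Fin n)) : ℝ :=
  -(p.1 * q.1) - p.2.1 * q.2.1 + ⟪p.2.2, q.2.2⟫

/-- The map `(θ, x) ↦ (cos θ, sin θ, x)` from `ℝ × S^{n-1}` to the isotropic cone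
`C_n ⊆ ℝ^{n+2}`. -/
noncomputable def Pmap {n : ℕ} (θ : ℝ) (x : EuclideanSpace ℝ (Fin n)) :
    ℝ × ℝ × EuclideanSpace ℝ (Fin n) :=
  (Real.cos θ, Real.sin θ, x)

/-! The scalar product of `P(θ,x)` and `P(θ',x')` is `cos d(x,x') - cos(θ - θ')`, and `cos` is
strictly decreasing on `[0, π]`, where both `|θ - θ'|` and `d(x,x')` lie. -/

lemma Real.le_arccos_iff_le_cos {a t : ℝ} (ha : a ∈ Set.Icc 0 π) (ht : t ∈ Set.Icc (-1) 1) :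
    a ≤ arccos t ↔ t ≤ cos a := by
  conv_lhs => rw [← arccos_cos ha.1 ha.2]
  exact strictAntiOn_arccos.le_iff_ge ⟨neg_one_le_cos a, cos_le_one a⟩ ht

lemma Real.lt_arccos_iff_lt_cos {a t : ℝ} (ha : a ∈ Set.Icc 0 π) (ht : t ∈ Set.Icc (-1) 1) :
    a < arccos t ↔ t < cos a := by
  conv_lhs => rw [← arccos_cos ha.1 ha.2]
  exact strictAntiOn_arccos.lt_iff_gt ⟨neg_one_le_cos a, cos_le_one a⟩ ht

lemma bilinE_Pmap {n : ℕ} (θ θ' : ℝ) (x x' : EuclideanSpace ℝ (Fin n)) :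
    bilinE n (Pmap θ x) (Pmap θ' x') = ⟪x, x'⟫ - cos (θ - θ') := by
  rw [bilinE, Pmap, Pmap, cos_sub]
  ring

theorem stmt2_general (n : ℕ) (θ θ' : ℝ)
    (x x' : EuclideanSpace ℝ (Fin n)) (hx : ‖x‖ = 1) (hx' : ‖x'‖ = 1)
    (hθ : |θ - θ'| ≤ π) :
    (|θ - θ'| ≤ sphDist x x' ↔ bilinE n (Pmap θ x) (Pmap θ' x') ≤ 0) ∧
    (|θ - θ'| < sphDist x x' ↔ bilinE n (Pmap θ x) (Pmap θ' x') < 0) := by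
  have hθ₀ : |θ - θ'| ∈ Set.Icc 0 π := ⟨abs_nonneg _, hθ⟩
  have hxx' : ⟪x, x'⟫ ∈ Set.Icc (-1) 1 := real_inner_mem_Icc_of_norm_eq_one hx hx'
  rw [sphDist, bilinE_Pmap, sub_nonpos, sub_neg, ← cos_abs,
    le_arccos_iff_le_cos hθ₀ hxx', lt_arccos_iff_lt_cos hθ₀ hxx']
  exact ⟨Iff.rfl, Iff.rfl⟩

/-- Coordinate form of the achronality/acausality criterion: for points
`(θ,x)`, `(θ′,x′)` of `ℝ × S^{n-1}` with `|θ − θ′| ≤ π`, one has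
`|θ − θ′| ≤ d(x,x′)` iff `⟨P(θ,x) | P(θ′,x′)⟩ ≤ 0`, and
`|θ − θ′| < d(x,x′)` iff `⟨P(θ,x) | P(θ′,x′)⟩ < 0`. -/
theorem stmt2 (n : ℕ) (hn : 1 ≤ n) (θ θ' : ℝ)
    (x x' : EuclideanSpace ℝ (Fin n)) (hx : ‖x‖ = 1) (hx' : ‖x'‖ = 1)
    (hθ : |θ - θ'| ≤ π) :
    (|θ - θ'| ≤ sphDist x x' ↔ bilinE n (Pmap θ x) (Pmap θ' x') ≤ 0) ∧
    (|θ - θ'| < sphDist x x' ↔ bilinE n (Pmap θ x) (Pmap θ' x') < 0) :=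
  stmt2_general n θ θ' x x' hx hx' hθ
end

section
/- For every m ≥ 1 and every z ∈ ℝ^{m+1}: ⟨z | x⟩ < 0 for every future-pointing null vector x if and only if z is future-pointing timelike (i.e. q_{1,m}(z) < 0 and z₀ > 0). -/
/-- The Minkowski quadratic form `q_{1,m}(x) = -x₀² + x₁² + ⋯ + x_m²` on
`ℝ × ℝᵐ` (first coordinate `x₀`). -/
def qMink (m : ℕ) (x : ℝ × (Fin m → ℝ)) : ℝ :=
  -(x.1 ^ 2) + ∑ i, (x.2 i) ^ 2

/-- The symmetric bilinear form associated to `q_{1,m}`. -/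
def bMink (m : ℕ) (x y : ℝ × (Fin m → ℝ)) : ℝ :=
  -(x.1 * y.1) + ∑ i, x.2 i * y.2 i

/-!
Reverse Cauchy–Schwarz gives one direction: for `z` timelike and `x` causal, both future-pointing,
`|z̄ · x̄|² ≤ |z̄|² |x̄|² < z₀² x₀²`, so `z̄ · x̄ < z₀ x₀`. Conversely, pairing `z` with the future
null vectors `(1, ±eᵢ)` forces `z₀ > |zᵢ| ≥ 0`, and pairing it with `(|z̄|, z̄)` forces `|z̄| < z₀`.
-/

section

variable {m : ℕ}

lemma qMink_eq_zero_iff (x : ℝ × (Fin m → ℝ)) : qMink m x = 0 ↔ ∑ i, x.2 i ^ 2 = x.1 ^ 2 := by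
  rw [qMink, neg_add_eq_zero, eq_comm]

lemma bMink_neg_of_timelike_of_causal {z x : ℝ × (Fin m → ℝ)} (hz : qMink m z < 0)
    (hz₀ : 0 < z.1) (hx : qMink m x ≤ 0) (hx₀ : 0 < x.1) : bMink m z x < 0 := by
  rw [qMink] at hz hx
  have hsq : (∑ i, z.2 i * x.2 i) ^ 2 < (z.1 * x.1) ^ 2 :=
    calc (∑ i, z.2 i * x.2 i) ^ 2 ≤ (∑ i, z.2 i ^ 2) * ∑ i, x.2 i ^ 2 :=
        Finset.sum_mul_sq_le_sq_mul_sq _ _ _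
      _ ≤ (∑ i, z.2 i ^ 2) * x.1 ^ 2 := by gcongr; linarith
      _ < z.1 ^ 2 * x.1 ^ 2 := by gcongr; linarith
      _ = (z.1 * x.1) ^ 2 := by ring
  have := (abs_lt_of_sq_lt_sq' hsq (by positivity)).2
  rw [bMink]
  linarith

lemma sum_mul_lt_of_forall_null {z : ℝ × (Fin m → ℝ)}
    (h : ∀ x : ℝ × (Fin m → ℝ), qMink m x = 0 → 0 < x.1 → bMink m z x < 0)
    {t : ℝ} (ht : 0 < t) {v : Fin m → ℝ} (hv : ∑ i, v i ^ 2 = t ^ 2) :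
    ∑ i, z.2 i * v i < z.1 * t := by
  have := h (t, v) ((qMink_eq_zero_iff _).2 hv) ht
  rw [bMink] at this
  linarith

lemma fst_pos_of_forall_null {z : ℝ × (Fin m → ℝ)}
    (h : ∀ x : ℝ × (Fin m → ℝ), qMink m x = 0 → 0 < x.1 → bMink m z x < 0) (i : Fin m) :
    0 < z.1 := by
  have hsingle : ∀ a : ℝ, ∑ j, z.2 j * Pi.single (M := fun _ ↦ ℝ) i a j = z.2 i * a :=
    fun a ↦ dotProduct_single z.2 a i
  have hnorm : ∀ a : ℝ, ∑ j, Pi.single (M := fun _ ↦ ℝ) i a j ^ 2 = a ^ 2 := by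
    intro a
    have := dotProduct_single (Pi.single (M := fun _ ↦ ℝ) i a) a i
    rw [dotProduct, Pi.single_eq_same] at this
    simpa only [sq] using this
  have hpos := sum_mul_lt_of_forall_null h one_pos ((hnorm 1).trans (by norm_num))
  have hneg := sum_mul_lt_of_forall_null h one_pos ((hnorm (-1)).trans (by norm_num))
  rw [hsingle] at hpos hneg
  linarith

lemma qMink_neg_of_forall_null {z : ℝ × (Fin m → ℝ)}
    (h : ∀ x : ℝ × (Fin m → ℝ), qMink m x = 0 → 0 < x.1 → bMink m z x < 0) (hz₀ : 0 < z.1) :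
    qMink m z < 0 := by
  set S := ∑ i, z.2 i ^ 2 with hS
  have hS_nonneg : 0 ≤ S := by positivity
  have hlt : S < z.1 ^ 2 := by
    rcases hS_nonneg.eq_or_lt with hS0 | hS_pos
    · rw [← hS0]; positivity
    · have hsqrt := Real.sq_sqrt hS_nonneg
      have := sum_mul_lt_of_forall_null h (Real.sqrt_pos.2 hS_pos) hsqrt.symm
      simp_rw [← sq, ← hS] at this
      have hsqrt_lt : √S < z.1 := by nlinarith [Real.sqrt_pos.2 hS_pos]
      calc S = √S ^ 2 := hsqrt.symm
        _ < z.1 ^ 2 := by gcongr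
  rw [qMink, ← hS]
  linarith

end

/-- `⟨z | x⟩ < 0` for every future-pointing null vector `x` if and only if
`z` is future-pointing timelike (`q_{1,m}(z) < 0` and `z₀ > 0`). -/
theorem stmt9 (m : ℕ) (hm : 1 ≤ m) (z : ℝ × (Fin m → ℝ)) :
    (∀ x : ℝ × (Fin m → ℝ), qMink m x = 0 → 0 < x.1 → bMink m z x < 0) ↔
      (qMink m z < 0 ∧ 0 < z.1) := by
  constructor
  · intro h
    have hz₀ := fst_pos_of_forall_null h ⟨0, hm⟩
    exact ⟨qMink_neg_of_forall_null h hz₀, hz₀⟩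
  · rintro ⟨hz, hz₀⟩ x hx hx₀
    exact bMink_neg_of_timelike_of_causal hz hz₀ hx.le hx₀
end

section
/- Let p, q ≥ 1 and n = p + q. Identify ℝ^{n+2} = ℝ^{p+1} × ℝ^{q+1} with the quadratic form q_{2,n}(a, b) = q_{1,p}(a) + q_{1,q}(b), and set Ĉ⁺_p = {(a, 0) : a future-pointing null in ℝ^{1,p}} and Ĉ⁺_q = {(0, b) : b future-pointing null in ℝ^{1,q}}. Then the invisible domain E = {z ∈ ℝ^{n+2} : q_{2,n}(z) < 0 and ⟨z | x⟩ < 0 for every x ∈ Ĉ⁺_p ∪ Ĉ⁺_q} equals {(a, b) : a future-pointing timelike in ℝ^{1,p} and b future-pointing timelike in ℝ^{1,q}}, and this set is exactly the interior in ℝ^{n+2} of the convex hull of Ĉ⁺_p ∪ Ĉ⁺_q. (The invisible domain of Λ_p ∪ Λ_q is the interior of its convex hull.) -/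
/-- `ℝ^{n+2} = ℝ^{p+1} × ℝ^{q+1}` with the quadratic form
`q_{2,n}(a,b) = q_{1,p}(a) + q_{1,q}(b)`. -/
def q2 (p q : ℕ) (z : (ℝ × (Fin p → ℝ)) × (ℝ × (Fin q → ℝ))) : ℝ :=
  qMink p z.1 + qMink q z.2

/-- The bilinear form associated to `q_{2,n} = q_{1,p} ⊕ q_{1,q}`. -/
def b2 (p q : ℕ) (z w : (ℝ × (Fin p → ℝ)) × (ℝ × (Fin q → ℝ))) : ℝ :=
  bMink p z.1 w.1 + bMink q z.2 w.2

/-- `Ĉ⁺_p = {(a, 0) : a future-pointing null in ℝ^{1,p}}`. -/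
def Cplusp (p q : ℕ) : Set ((ℝ × (Fin p → ℝ)) × (ℝ × (Fin q → ℝ))) :=
  {z | qMink p z.1 = 0 ∧ 0 < z.1.1 ∧ z.2 = 0}

/-- `Ĉ⁺_q = {(0, b) : b future-pointing null in ℝ^{1,q}}`. -/
def Cplusq (p q : ℕ) : Set ((ℝ × (Fin p → ℝ)) × (ℝ × (Fin q → ℝ))) :=
  {z | qMink q z.2 = 0 ∧ 0 < z.2.1 ∧ z.1 = 0}

/-- The invisible domain of `Ĉ⁺_p ∪ Ĉ⁺_q`. -/
def invisDom (p q : ℕ) : Set ((ℝ × (Fin p → ℝ)) × (ℝ × (Fin q → ℝ))) :=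
  {z | q2 p q z < 0 ∧ ∀ x ∈ Cplusp p q ∪ Cplusq p q, b2 p q z x < 0}

/-!
Write a vector of `ℝ^{1,m}` as `(t, x)`: it is future timelike iff `‖x‖ < t` and future null iff
`‖x‖ = t > 0`. By Cauchy–Schwarz a future timelike vector pairs negatively with every future null
vector, while pairing `(t, x)` with the null vector `(1, x / ‖x‖)` gives `‖x‖ - t`. As `Ĉ⁺_p` and
`Ĉ⁺_q` lie in orthogonal factors, this identifies the invisible domain with the product
`T_p × T_q` of the future timelike cones.

A future timelike vector `(t, s e)` with `‖e‖ = 1` is the midpoint of the null vectors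
`(t + s) (1, e)` and `(t - s) (1, -e)`, and `(a, b) = ½ (2a, 0) + ½ (0, 2b)`; so the open set
`T_p × T_q` lies in the convex hull. Conversely the hull lies in the product of the closed
causal cones `‖x‖ ≤ t`, whose interior is `T_p × T_q`.
-/

open Set Filter Topology
open scoped InnerProductSpace

theorem exists_norm_eq_one_smul_eq {E : Type*} [NormedAddCommGroup E] [NormedSpace ℝ E]
    [Nontrivial E] (x : E) : ∃ e : E, ‖e‖ = 1 ∧ ‖x‖ • e = x := by
  rcases eq_or_ne x 0 with rfl | hx
  · obtain ⟨e, he⟩ := exists_norm_eq E zero_le_one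
    exact ⟨e, he, by simp⟩
  · refine ⟨‖x‖⁻¹ • x, by simp [norm_smul, hx], ?_⟩
    rw [smul_smul, mul_inv_cancel₀ (norm_ne_zero_iff.2 hx), one_smul]

section Minkowski

variable {m : ℕ}

noncomputable def spatialPart (m : ℕ) : ℝ × (Fin m → ℝ) →L[ℝ] EuclideanSpace ℝ (Fin m) :=
  (EuclideanSpace.equiv (Fin m) ℝ).symm.toContinuousLinearMap.comp
    (ContinuousLinearMap.snd ℝ ℝ (Fin m → ℝ))

theorem spatialPart_apply (a : ℝ × (Fin m → ℝ)) : spatialPart m a = WithLp.toLp 2 a.2 := rfl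

@[simp]
theorem spatialPart_mk (c : ℝ) (v : EuclideanSpace ℝ (Fin m)) :
    spatialPart m (c, v.ofLp) = v := rfl

theorem qMink_eq_norm_sq_sub (a : ℝ × (Fin m → ℝ)) :
    qMink m a = ‖spatialPart m a‖ ^ 2 - a.1 ^ 2 := by
  rw [qMink, EuclideanSpace.norm_sq_eq]
  simp only [spatialPart_apply, Real.norm_eq_abs, sq_abs]
  ring

theorem bMink_eq_inner_sub (a u : ℝ × (Fin m → ℝ)) :
    bMink m a u = ⟪spatialPart m a, spatialPart m u⟫_ℝ - a.1 * u.1 := by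
  rw [bMink, PiLp.inner_apply]
  simp only [spatialPart_apply, RCLike.inner_apply', conj_trivial]
  ring

theorem bMink_zero_right (a : ℝ × (Fin m → ℝ)) : bMink m a 0 = 0 := by
  simp [bMink]

def futureNullCone (m : ℕ) : Set (ℝ × (Fin m → ℝ)) := {a | qMink m a = 0 ∧ 0 < a.1}

def futureTimelikeCone (m : ℕ) : Set (ℝ × (Fin m → ℝ)) := {a | qMink m a < 0 ∧ 0 < a.1}

def futureCausalCone (m : ℕ) : Set (ℝ × (Fin m → ℝ)) := {a | ‖spatialPart m a‖ ≤ a.1}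

theorem mem_futureNullCone_iff {a : ℝ × (Fin m → ℝ)} :
    a ∈ futureNullCone m ↔ ‖spatialPart m a‖ = a.1 ∧ 0 < a.1 := by
  rw [futureNullCone, mem_ofPred_eq, qMink_eq_norm_sq_sub, sub_eq_zero]
  constructor
  · rintro ⟨h, ha⟩
    exact ⟨(pow_left_inj₀ (norm_nonneg _) ha.le two_ne_zero).1 h, ha⟩
  · rintro ⟨h, ha⟩
    exact ⟨by rw [h], ha⟩

theorem mem_futureTimelikeCone_iff {a : ℝ × (Fin m → ℝ)} :
    a ∈ futureTimelikeCone m ↔ ‖spatialPart m a‖ < a.1 := by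
  rw [futureTimelikeCone, mem_ofPred_eq, qMink_eq_norm_sq_sub, sub_neg]
  constructor
  · rintro ⟨h, ha⟩
    exact (sq_lt_sq₀ (norm_nonneg _) ha.le).1 h
  · intro h
    have ha := (norm_nonneg _).trans_lt h
    exact ⟨(sq_lt_sq₀ (norm_nonneg _) ha.le).2 h, ha⟩

theorem mk_mem_futureNullCone {e : EuclideanSpace ℝ (Fin m)} (he : ‖e‖ = 1) {c : ℝ}
    (hc : 0 < c) : (c, c • e.ofLp) ∈ futureNullCone m := by
  rw [mem_futureNullCone_iff, ← WithLp.ofLp_smul, spatialPart_mk, norm_smul, he,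
    Real.norm_of_nonneg hc.le, mul_one]
  exact ⟨rfl, hc⟩

theorem smul_mem_futureTimelikeCone {a : ℝ × (Fin m → ℝ)} (ha : a ∈ futureTimelikeCone m)
    {c : ℝ} (hc : 0 < c) : c • a ∈ futureTimelikeCone m := by
  rw [mem_futureTimelikeCone_iff] at ha ⊢
  rw [map_smul, norm_smul, Real.norm_of_nonneg hc.le, Prod.smul_fst, smul_eq_mul]
  exact mul_lt_mul_of_pos_left ha hc

theorem isOpen_futureTimelikeCone : IsOpen (futureTimelikeCone m) := by
  have h : futureTimelikeCone m = {a | ‖spatialPart m a‖ < a.1} :=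
    ext fun _ ↦ mem_futureTimelikeCone_iff
  rw [h]
  exact isOpen_lt (by fun_prop) continuous_fst

theorem bMink_neg_of_mem_futureTimelikeCone {a u : ℝ × (Fin m → ℝ)}
    (ha : a ∈ futureTimelikeCone m) (hu : u ∈ futureNullCone m) : bMink m a u < 0 := by
  rw [mem_futureTimelikeCone_iff] at ha
  obtain ⟨hu, hu₀⟩ := mem_futureNullCone_iff.1 hu
  rw [bMink_eq_inner_sub, sub_neg]
  calc ⟪spatialPart m a, spatialPart m u⟫_ℝ ≤ ‖spatialPart m a‖ * ‖spatialPart m u‖ :=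
        real_inner_le_norm _ _
    _ < a.1 * u.1 := by rw [hu]; exact mul_lt_mul_of_pos_right ha hu₀

theorem mem_futureTimelikeCone_of_forall_bMink_neg (hm : 1 ≤ m) {a : ℝ × (Fin m → ℝ)}
    (h : ∀ u ∈ futureNullCone m, bMink m a u < 0) : a ∈ futureTimelikeCone m := by
  have : Nonempty (Fin m) := ⟨⟨0, hm⟩⟩
  obtain ⟨e, he, hae⟩ := exists_norm_eq_one_smul_eq (spatialPart m a)
  have hu := h _ (mk_mem_futureNullCone he one_pos)
  rw [bMink_eq_inner_sub, one_smul, spatialPart_mk, ← hae, real_inner_smul_left,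
    real_inner_self_eq_norm_sq, he] at hu
  rw [mem_futureTimelikeCone_iff]
  simpa using hu

theorem futureTimelikeCone_subset_convexHull (hm : 1 ≤ m) :
    futureTimelikeCone m ⊆ convexHull ℝ (futureNullCone m) := by
  intro a ha
  have : Nonempty (Fin m) := ⟨⟨0, hm⟩⟩
  rw [mem_futureTimelikeCone_iff] at ha
  obtain ⟨e, he, hae⟩ := exists_norm_eq_one_smul_eq (spatialPart m a)
  set s := ‖spatialPart m a‖
  have hs := norm_nonneg (spatialPart m a)
  have hu := mk_mem_futureNullCone he (c := a.1 + s) (by linarith)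
  have hv := mk_mem_futureNullCone (e := -e) (by rwa [norm_neg]) (c := a.1 - s) (by linarith)
  have ha2 : s • e.ofLp = a.2 := congrArg WithLp.ofLp hae
  have hmid : (1 / 2 : ℝ) • (a.1 + s, (a.1 + s) • e.ofLp)
      + (1 / 2 : ℝ) • (a.1 - s, (a.1 - s) • (-e).ofLp) = a := by
    refine Prod.ext ?_ ?_
    · simp only [Prod.fst_add, Prod.smul_fst, smul_eq_mul]
      ring
    · simp only [Prod.snd_add, Prod.smul_snd, WithLp.ofLp_neg, ← ha2]
      module
  rw [← hmid]
  exact convex_convexHull ℝ _ (subset_convexHull ℝ _ hu) (subset_convexHull ℝ _ hv)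
    (by norm_num) (by norm_num) (by norm_num)

theorem convex_futureCausalCone : Convex ℝ (futureCausalCone m) := by
  intro a ha b hb s t hs ht _
  calc ‖spatialPart m (s • a + t • b)‖
      ≤ s * ‖spatialPart m a‖ + t * ‖spatialPart m b‖ := by
        rw [map_add, map_smul, map_smul]
        refine (norm_add_le _ _).trans_eq ?_
        rw [norm_smul, norm_smul, Real.norm_of_nonneg hs, Real.norm_of_nonneg ht]
    _ ≤ s * a.1 + t * b.1 := by gcongr <;> assumption
    _ = (s • a + t • b).1 := rfl

theorem futureNullCone_subset_futureCausalCone : futureNullCone m ⊆ futureCausalCone m :=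
  fun _ ha ↦ (mem_futureNullCone_iff.1 ha).1.le

theorem zero_mem_futureCausalCone : (0 : ℝ × (Fin m → ℝ)) ∈ futureCausalCone m := by
  simp [futureCausalCone]

theorem interior_futureCausalCone : interior (futureCausalCone m) = futureTimelikeCone m := by
  refine Subset.antisymm (fun a ha ↦ ?_) (interior_maximal
    (fun a ha ↦ (mem_futureTimelikeCone_iff.1 ha).le) isOpen_futureTimelikeCone)
  -- moving `a` slightly into the past keeps it in the causal cone
  have hpast : Tendsto (fun ε : ℝ ↦ a - (ε, 0)) (𝓝 0) (𝓝 a) :=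
    Continuous.tendsto' (by fun_prop) 0 a (by simp)
  obtain ⟨ε, hK, hε⟩ := ((hpast.eventually (mem_interior_iff_mem_nhds.1 ha)).filter_mono
    nhdsWithin_le_nhds |>.and (self_mem_nhdsWithin (s := Ioi 0))).exists
  have hspatial : spatialPart m (a - (ε, 0)) = spatialPart m a := by
    simp [spatialPart]
  rw [mem_futureTimelikeCone_iff]
  change ‖spatialPart m (a - (ε, 0))‖ ≤ a.1 - ε at hK
  rw [hspatial] at hK
  linarith

end Minkowski

section Product

variable {p q : ℕ}

theorem Cplusp_eq : Cplusp p q = futureNullCone p ×ˢ {0} := by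
  ext z
  simp [Cplusp, futureNullCone, and_assoc]

theorem Cplusq_eq : Cplusq p q = {0} ×ˢ futureNullCone q := by
  ext z
  simp only [Cplusq, futureNullCone, mem_prod, mem_singleton_iff, mem_ofPred_eq]
  tauto

theorem invisDom_eq (hp : 1 ≤ p) (hq : 1 ≤ q) :
    invisDom p q = futureTimelikeCone p ×ˢ futureTimelikeCone q := by
  ext z
  simp only [invisDom, Cplusp_eq, Cplusq_eq, mem_ofPred_eq]
  constructor
  · rintro ⟨-, h⟩
    refine ⟨mem_futureTimelikeCone_of_forall_bMink_neg hp fun u hu ↦ ?_,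
      mem_futureTimelikeCone_of_forall_bMink_neg hq fun v hv ↦ ?_⟩
    · simpa [b2, bMink_zero_right] using h (u, 0) (Or.inl ⟨hu, rfl⟩)
    · simpa [b2, bMink_zero_right] using h (0, v) (Or.inr ⟨rfl, hv⟩)
  · rintro ⟨ha, hb⟩
    refine ⟨add_neg ha.1 hb.1, ?_⟩
    rintro x (⟨hx, hx₀⟩ | ⟨hx₀, hx⟩)
    · rw [b2, show x.2 = 0 from hx₀, bMink_zero_right, add_zero]
      exact bMink_neg_of_mem_futureTimelikeCone ha hx
    · rw [b2, show x.1 = 0 from hx₀, bMink_zero_right, zero_add]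
      exact bMink_neg_of_mem_futureTimelikeCone hb hx

theorem futureTimelikeCone_prod_subset_convexHull (hp : 1 ≤ p) (hq : 1 ≤ q) :
    futureTimelikeCone p ×ˢ futureTimelikeCone q ⊆ convexHull ℝ (Cplusp p q ∪ Cplusq p q) := by
  rintro ⟨a, b⟩ ⟨ha, hb⟩
  have hl : ((2 : ℝ) • a, 0) ∈ convexHull ℝ (Cplusp p q ∪ Cplusq p q) := by
    refine convexHull_mono subset_union_left ?_
    rw [Cplusp_eq, convexHull_prod, convexHull_singleton]
    exact ⟨futureTimelikeCone_subset_convexHull hp (smul_mem_futureTimelikeCone ha two_pos), rfl⟩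
  have hr : (0, (2 : ℝ) • b) ∈ convexHull ℝ (Cplusp p q ∪ Cplusq p q) := by
    refine convexHull_mono subset_union_right ?_
    rw [Cplusq_eq, convexHull_prod, convexHull_singleton]
    exact ⟨rfl, futureTimelikeCone_subset_convexHull hq (smul_mem_futureTimelikeCone hb two_pos)⟩
  have hmid : (1 / 2 : ℝ) • ((2 : ℝ) • a, 0) + (1 / 2 : ℝ) • (0, (2 : ℝ) • b) = (a, b) := by
    ext1 <;> simp [smul_smul]
  rw [← hmid]
  exact convex_convexHull ℝ _ hl hr (by norm_num) (by norm_num) (by norm_num)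

theorem convexHull_subset_futureCausalCone_prod :
    convexHull ℝ (Cplusp p q ∪ Cplusq p q) ⊆ futureCausalCone p ×ˢ futureCausalCone q := by
  refine convexHull_min ?_ (convex_futureCausalCone.prod convex_futureCausalCone)
  rw [Cplusp_eq, Cplusq_eq]
  exact union_subset
    (prod_mono futureNullCone_subset_futureCausalCone
      (singleton_subset_iff.2 zero_mem_futureCausalCone))
    (prod_mono (singleton_subset_iff.2 zero_mem_futureCausalCone)
      futureNullCone_subset_futureCausalCone)

end Product

/-- The invisible domain of `Λ_p ∪ Λ_q` equals the set of pairs of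
future-pointing timelike vectors, which is the interior of the convex hull of
`Ĉ⁺_p ∪ Ĉ⁺_q`. -/
theorem stmt10 (p q : ℕ) (hp : 1 ≤ p) (hq : 1 ≤ q) :
    invisDom p q =
      {z : (ℝ × (Fin p → ℝ)) × (ℝ × (Fin q → ℝ)) |
        (qMink p z.1 < 0 ∧ 0 < z.1.1) ∧ (qMink q z.2 < 0 ∧ 0 < z.2.1)} ∧
    invisDom p q = interior (convexHull ℝ (Cplusp p q ∪ Cplusq p q)) := by
  have hT := invisDom_eq hp hq
  refine ⟨hT, hT.trans (Subset.antisymm ?_ ?_)⟩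
  · exact interior_maximal (futureTimelikeCone_prod_subset_convexHull hp hq)
      (isOpen_futureTimelikeCone.prod isOpen_futureTimelikeCone)
  · calc interior (convexHull ℝ (Cplusp p q ∪ Cplusq p q))
        ⊆ interior (futureCausalCone p ×ˢ futureCausalCone q) :=
          interior_mono convexHull_subset_futureCausalCone_prod
      _ = futureTimelikeCone p ×ˢ futureTimelikeCone q := by
          rw [interior_prod_eq, interior_futureCausalCone, interior_futureCausalCone]
end

section
/- Let p, q ≥ 1 and n = p + q, and identify ℝ^{n+2} = ℝ^{p+1} × ℝ^{q+1} with q_{2,n}(a, b) = q_{1,p}(a) + q_{1,q}(b). Let Λ̂_{p,q} = {(a, b) : q_{1,p}(a) = 0, q_{1,q}(b) = 0, a₀ ≥ 0, b₀ ≥ 0}. Then ⟨z | z′⟩ ≤ 0 for all z, z′ ∈ Λ̂_{p,q}. (Hence the limit set Λ_{p,q} of a split AdS spacetime is achronal.) -/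
lemma sum_sq_le_sq_of_qMink_nonpos {m : ℕ} {x : ℝ × (Fin m → ℝ)} (hx : qMink m x ≤ 0) :
    ∑ i, x.2 i ^ 2 ≤ x.1 ^ 2 := by
  unfold qMink at hx
  linarith

lemma bMink_nonpos_of_causal {m : ℕ} {x y : ℝ × (Fin m → ℝ)}
    (hx : qMink m x ≤ 0) (hy : qMink m y ≤ 0) (hx₀ : 0 ≤ x.1) (hy₀ : 0 ≤ y.1) :
    bMink m x y ≤ 0 := by
  have hsq : (∑ i, x.2 i * y.2 i) ^ 2 ≤ (x.1 * y.1) ^ 2 :=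
    calc (∑ i, x.2 i * y.2 i) ^ 2 ≤ (∑ i, x.2 i ^ 2) * ∑ i, y.2 i ^ 2 :=
          Finset.sum_mul_sq_le_sq_mul_sq _ _ _
      _ ≤ x.1 ^ 2 * y.1 ^ 2 :=
          mul_le_mul (sum_sq_le_sq_of_qMink_nonpos hx) (sum_sq_le_sq_of_qMink_nonpos hy)
            (by positivity) (by positivity)
      _ = (x.1 * y.1) ^ 2 := by ring
  have hle := (abs_le_of_sq_le_sq' hsq (mul_nonneg hx₀ hy₀)).2
  unfold bMink
  linarith

theorem stmt11_general (p q : ℕ)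
    (z z' : (ℝ × (Fin p → ℝ)) × (ℝ × (Fin q → ℝ)))
    (hz : qMink p z.1 = 0 ∧ qMink q z.2 = 0 ∧ 0 ≤ z.1.1 ∧ 0 ≤ z.2.1)
    (hz' : qMink p z'.1 = 0 ∧ qMink q z'.2 = 0 ∧ 0 ≤ z'.1.1 ∧ 0 ≤ z'.2.1) :
    b2 p q z z' ≤ 0 := by
  obtain ⟨ha, hb, ha₀, hb₀⟩ := hz
  obtain ⟨ha', hb', ha₀', hb₀'⟩ := hz'
  exact add_nonpos (bMink_nonpos_of_causal ha.le ha'.le ha₀ ha₀')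
    (bMink_nonpos_of_causal hb.le hb'.le hb₀ hb₀')

/-- The set `Λ̂_{p,q} = {(a,b) : q_{1,p}(a) = 0, q_{1,q}(b) = 0, a₀ ≥ 0, b₀ ≥ 0}`
has pairwise nonpositive scalar products: the limit set of a split AdS
spacetime is achronal. -/
theorem stmt11 (p q : ℕ) (hp : 1 ≤ p) (hq : 1 ≤ q)
    (z z' : (ℝ × (Fin p → ℝ)) × (ℝ × (Fin q → ℝ)))
    (hz : qMink p z.1 = 0 ∧ qMink q z.2 = 0 ∧ 0 ≤ z.1.1 ∧ 0 ≤ z.2.1)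
    (hz' : qMink p z'.1 = 0 ∧ qMink q z'.2 = 0 ∧ 0 ≤ z'.1.1 ∧ 0 ≤ z'.2.1) :
    b2 p q z z' ≤ 0 :=
  stmt11_general p q z z' hz hz'
end
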